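/- Let s* be the optimal selection under constraint Σ_t s_t ≥ B (per the thresholded construction with sorted losses ℓ(π(1)) ≤ ... ≤ ℓ(π(T))), and let s° be the unconstrained optimal selection (s°_t = 1 iff ℓ(t) ≤ 0). Then L(s*) - L(s°) = Σ_{t : 0 < ℓ(t) ≤ ℓ(π(B))} ℓ(t) ≥ 0, where L is the total selection squared loss. In particular the excess loss incurred by the interpretability constraint is exactly the sum of the positive loss differences forced into the selection. -/
import Mathlib


open Finset

/-- The excess loss of the constrained optimal selection over the unconstrained one
is exactly the sum of the positive loss differences forced into the selection. -/
theorem excess_loss_of_constraint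
    (T B : ℕ) (hT : 1 ≤ T) (hB1 : 1 ≤ B) (hBT : B ≤ T)
    (f g y : Fin T → ℝ)
    (ℓ : Fin T → ℝ)
    (hℓ : ∀ t, ℓ t = (f t - y t) ^ 2 - (g t - y t) ^ 2)
    (hinj : Function.Injective ℓ)
    (π : Equiv.Perm (Fin T))
    (hsort : ∀ i j : Fin T, i ≤ j → ℓ (π i) ≤ ℓ (π j))
    (sstar : Fin T → ℝ)
    (hstar : ∀ t, sstar t =
      if ℓ t ≤ max 0 (ℓ (π ⟨B - 1, by omega⟩)) then 1 else 0)
    (scirc : Fin T → ℝ)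
    (hscirc : ∀ t, scirc t = if ℓ t ≤ 0 then 1 else 0)
    (L : (Fin T → ℝ) → ℝ)
    (hL : ∀ s, L s = ∑ t, (y t - s t * f t - (1 - s t) * g t) ^ 2) :
    L sstar - L scirc
        = ∑ t ∈ Finset.univ.filter
            (fun t : Fin T => 0 < ℓ t ∧ ℓ t ≤ ℓ (π ⟨B - 1, by omega⟩)), ℓ t ∧
      0 ≤ ∑ t ∈ Finset.univ.filter
            (fun t : Fin T => 0 < ℓ t ∧ ℓ t ≤ ℓ (π ⟨B - 1, by omega⟩)), ℓ t := by
  have key : ∀ t, (y t - sstar t * f t - (1 - sstar t) * g t) ^ 2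
      - (y t - scirc t * f t - (1 - scirc t) * g t) ^ 2
      = if 0 < ℓ t ∧ ℓ t ≤ ℓ (π ⟨B - 1, by omega⟩) then ℓ t else 0 := by
    intro t
    rw [hstar, hscirc]
    by_cases h0 : ℓ t ≤ 0
    · have h1 : ℓ t ≤ max 0 (ℓ (π ⟨B - 1, by omega⟩)) :=
        le_trans h0 (le_max_left _ _)
      rw [if_pos h1, if_pos h0, if_neg (by intro h; exact absurd h.1 (not_lt.mpr h0))]
      ring
    · push_neg at h0
      by_cases h2 : ℓ t ≤ ℓ (π ⟨B - 1, by omega⟩)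
      · have h1 : ℓ t ≤ max 0 (ℓ (π ⟨B - 1, by omega⟩)) :=
          le_trans h2 (le_max_right _ _)
        rw [if_pos h1, if_neg (not_le.mpr h0), if_pos ⟨h0, h2⟩, hℓ]
        ring
      · have h1 : ¬ ℓ t ≤ max 0 (ℓ (π ⟨B - 1, by omega⟩)) :=
          not_le.mpr (max_lt h0 (not_le.mp h2))
        rw [if_neg h1, if_neg (not_le.mpr h0), if_neg (by tauto)]
        ring
  constructor
  · rw [hL, hL, ← Finset.sum_sub_distrib, Finset.sum_filter]
    exact Finset.sum_congr rfl fun t _ => key t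
  · apply Finset.sum_nonneg
    intro t ht
    exact le_of_lt (Finset.mem_filter.mp ht).2.1
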